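/- arXiv:2111.15482 — 3 statements merged into one kernel-verified Lean document; each statement's English description precedes it below -/
import Mathlib

section
/- Let m : ℝ³ → ℝ³ be four times continuously differentiable (ContDiff ℝ 4). Then for every x ∈ ℝ³: m(x) × Δ²m(x) = Δ(y ↦ m(y) × Δm(y))(x) − 2 Σ_{k=1}^{3} ∂_k(y ↦ ∂_k m(y) × Δm(y))(x), and equivalently m(x) × Δ²m(x) = Δ(y ↦ m(y) × Δm(y))(x) − 2 Σ_{k=1}^{3} ∂_k m(x) × ∂_k(Δm)(x). -/
/-!
For a continuous bilinear map `B`, the Leibniz rule `∂ₖ B(f, g) = B(∂ₖ f, g) + B(f, ∂ₖ g)`,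
applied twice and summed over `k`, gives
`Δ B(f, g) = B(Δf, g) + 2 Σₖ B(∂ₖ f, ∂ₖ g) + B(f, Δg)` and
`Σₖ ∂ₖ B(∂ₖ f, g) = B(Δf, g) + Σₖ B(∂ₖ f, ∂ₖ g)`.
Taking `B` the cross product, `f = m` and `g = Δm`, the terms `Δm × Δm` vanish and both
identities drop out.
-/

open MeasureTheory
open scoped RealInnerProductSpace

noncomputable section

/-- ℝ³ as a Euclidean space. -/
abbrev E3 := EuclideanSpace ℝ (Fin 3)

/-- Partial derivative in the `k`-th standard coordinate direction. -/
noncomputable def pd {F : Type*} [NormedAddCommGroup F] [NormedSpace ℝ F]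
    (k : Fin 3) (f : E3 → F) (x : E3) : F :=
  fderiv ℝ f x (EuclideanSpace.single k 1)

/-- Componentwise Laplacian `Δf = Σ_k ∂_k ∂_k f`. -/
noncomputable def lap {F : Type*} [NormedAddCommGroup F] [NormedSpace ℝ F]
    (f : E3 → F) (x : E3) : F :=
  ∑ k : Fin 3, pd k (pd k f) x

/-- Cross product on ℝ³. -/
noncomputable def cross3 (a b : E3) : E3 :=
  (WithLp.equiv 2 (Fin 3 → ℝ)).symm
    (crossProduct ((WithLp.equiv 2 (Fin 3 → ℝ)) a) ((WithLp.equiv 2 (Fin 3 → ℝ)) b))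

section Calculus

variable {F G H : Type*} [NormedAddCommGroup F] [NormedSpace ℝ F]
  [NormedAddCommGroup G] [NormedSpace ℝ G] [NormedAddCommGroup H] [NormedSpace ℝ H]

theorem ContDiff.pd {n : WithTop ℕ∞} (k : Fin 3) {f : E3 → F} (hf : ContDiff ℝ (n + 1) f) :
    ContDiff ℝ n (pd k f) :=
  (hf.fderiv_right le_rfl).clm_apply contDiff_const

theorem ContDiff.lap {n : WithTop ℕ∞} {f : E3 → F} (hf : ContDiff ℝ (n + 2) f) :
    ContDiff ℝ n (lap f) := by
  have hf' : ContDiff ℝ (n + 1 + 1) f := by rwa [add_assoc, one_add_one_eq_two]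
  exact ContDiff.sum fun k _ => (hf'.pd k).pd k

theorem pd_add (k : Fin 3) {f g : E3 → F} {x : E3}
    (hf : DifferentiableAt ℝ f x) (hg : DifferentiableAt ℝ g x) :
    pd k (fun y => f y + g y) x = pd k f x + pd k g x := by
  simp only [pd, fderiv_fun_add hf hg, add_apply]

theorem pd_bilinear (B : F →L[ℝ] G →L[ℝ] H) (k : Fin 3) {f : E3 → F} {g : E3 → G} {x : E3}
    (hf : DifferentiableAt ℝ f x) (hg : DifferentiableAt ℝ g x) :
    pd k (fun y => B (f y) (g y)) x = B (pd k f x) (g x) + B (f x) (pd k g x) := by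
  simp only [pd, B.fderiv_of_bilinear hf hg, add_apply,
    ContinuousLinearMap.precompR_apply, ContinuousLinearMap.precompL_apply,
    ContinuousLinearMap.compL_apply, ContinuousLinearMap.comp_apply]
  exact add_comm _ _

theorem sum_pd_bilinear_pd (B : F →L[ℝ] G →L[ℝ] H) {f : E3 → F} {g : E3 → G} {x : E3}
    (hf : ContDiff ℝ 2 f) (hg : DifferentiableAt ℝ g x) :
    ∑ k : Fin 3, pd k (fun y => B (pd k f y) (g y)) x
      = B (lap f x) (g x) + ∑ k : Fin 3, B (pd k f x) (pd k g x) := by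
  have hpd (k : Fin 3) : DifferentiableAt ℝ (pd k f) x :=
    ((hf.pd k).differentiable one_ne_zero).differentiableAt
  simp only [pd_bilinear B _ (hpd _) hg, Finset.sum_add_distrib, lap, map_sum,
    sum_apply]

theorem lap_bilinear (B : F →L[ℝ] G →L[ℝ] H) {f : E3 → F} {g : E3 → G}
    (hf : ContDiff ℝ 2 f) (hg : ContDiff ℝ 2 g) (x : E3) :
    lap (fun y => B (f y) (g y)) x
      = B (lap f x) (g x) + (2 : ℝ) • ∑ k : Fin 3, B (pd k f x) (pd k g x) + B (f x) (lap g x) := by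
  have hf1 := hf.differentiable two_ne_zero
  have hg1 := hg.differentiable two_ne_zero
  -- Writing the second Leibniz term through `B.flip` lets `sum_pd_bilinear_pd` treat both halves.
  have pd_product (k : Fin 3) :
      pd k (fun y => B (f y) (g y)) = fun y => B (pd k f y) (g y) + B.flip (pd k g y) (f y) :=
    funext fun y => pd_bilinear B k (hf1 y) (hg1 y)
  have hpd_f (k : Fin 3) : Differentiable ℝ (pd k f) := (hf.pd k).differentiable one_ne_zero
  have hpd_g (k : Fin 3) : Differentiable ℝ (pd k g) := (hg.pd k).differentiable one_ne_zero
  have pd_pd_product (k : Fin 3) : pd k (pd k fun y => B (f y) (g y)) x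
      = pd k (fun y => B (pd k f y) (g y)) x + pd k (fun y => B.flip (pd k g y) (f y)) x := by
    rw [pd_product k]
    exact pd_add k (by fun_prop) (by fun_prop)
  rw [lap]
  simp only [pd_pd_product, Finset.sum_add_distrib]
  rw [sum_pd_bilinear_pd B hf (hg1 x), sum_pd_bilinear_pd B.flip hg (hf1 x)]
  simp only [ContinuousLinearMap.flip_apply, two_smul]
  abel

end Calculus

def cross3CLM : E3 →L[ℝ] E3 →L[ℝ] E3 :=
  let e := WithLp.linearEquiv 2 ℝ (Fin 3 → ℝ)
  LinearMap.toContinuousLinearMap <| LinearMap.toContinuousLinearMap.toLinearMap ∘ₗ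
    (crossProduct.compl₁₂ e.toLinearMap e.toLinearMap).compr₂ e.symm.toLinearMap

theorem cross3CLM_apply (a b : E3) : cross3CLM a b = cross3 a b := rfl

theorem cross3_self (a : E3) : cross3 a a = 0 := by
  simp [cross3, cross_self]

/-- Divergence structure of the leading term `m × Δ²m` of the LLG equation. -/
theorem divergence_structure_LLG (m : E3 → E3) (hm : ContDiff ℝ 4 m) (x : E3) :
    cross3 (m x) (lap (lap m) x) =
        lap (fun y => cross3 (m y) (lap m y)) x
          - (2 : ℝ) • ∑ k : Fin 3, pd k (fun y => cross3 (pd k m y) (lap m y)) x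
    ∧ cross3 (m x) (lap (lap m) x) =
        lap (fun y => cross3 (m y) (lap m y)) x
          - (2 : ℝ) • ∑ k : Fin 3, cross3 (pd k m x) (pd k (lap m) x) := by
  have hm2 : ContDiff ℝ 2 m := hm.of_le (by norm_num)
  have hlap : ContDiff ℝ 2 (lap m) := hm.lap
  have expand_lap := lap_bilinear cross3CLM hm2 hlap x
  have expand_sum := sum_pd_bilinear_pd cross3CLM hm2 ((hlap.differentiable two_ne_zero) x)
  simp only [cross3CLM_apply, cross3_self, zero_add] at expand_lap expand_sum
  rw [expand_lap, expand_sum, add_sub_cancel_left]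
  exact ⟨rfl, rfl⟩
end
end

section
/- Let m : ℝ⁴ → ℝ³ be twice continuously differentiable (ContDiff ℝ 2) with ‖m(x)‖ = 1 for all x ∈ ℝ⁴. Define the space-time vorticity components ω_{μν}(x) := ⟪m(x), ∂_μ m(x) × ∂_ν m(x)⟫ for μ, ν ∈ {0,1,2,3}. Then Bianchi's identity holds: for all σ, μ, ν ∈ {0,1,2,3} and all x ∈ ℝ⁴, ∂_σ ω_{μν}(x) + ∂_ν ω_{σμ}(x) + ∂_μ ω_{νσ}(x) = 0. -/
/-!
Differentiating `ω(u, v) = ⟪m, Dm u × Dm v⟫` in the direction `w` gives the triple product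
`⟪Dm w, Dm u × Dm v⟫` plus two terms involving `D²m`. Since `‖m‖ = 1`, the vectors `Dm u`, `Dm v`,
`Dm w` are all orthogonal to `m ≠ 0`, hence coplanar, so the triple product vanishes. In the cyclic
sum the six `D²m` terms cancel in pairs, by the symmetry of `D²m` and the antisymmetry of `×`.
-/

open scoped RealInnerProductSpace

noncomputable section

/-- Space-time ℝ⁴ as a Euclidean space (coordinate 0 is time). -/
abbrev E4 := EuclideanSpace ℝ (Fin 4)

/-- Partial derivative in the `μ`-th standard coordinate direction of ℝ⁴. -/
noncomputable def pd4 {F : Type*} [NormedAddCommGroup F] [NormedSpace ℝ F]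
    (μ : Fin 4) (f : E4 → F) (x : E4) : F :=
  fderiv ℝ f x (EuclideanSpace.single μ 1)

/-- The space-time vorticity `ω_{μν} = m · (∂_μ m × ∂_ν m)`. -/
noncomputable def omega (m : E4 → E3) (μ ν : Fin 4) (x : E4) : ℝ :=
  ⟪m x, cross3 (pd4 μ m x) (pd4 ν m x)⟫

open Matrix

def crossL : E3 →L[ℝ] E3 →L[ℝ] E3 :=
  let e := WithLp.linearEquiv 2 ℝ (Fin 3 → ℝ)
  LinearMap.toContinuousLinearMap <| LinearMap.toContinuousLinearMap.toLinearMap ∘ₗ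
    (crossProduct.compl₁₂ e.toLinearMap e.toLinearMap).compr₂ e.symm.toLinearMap

theorem crossL_apply (a b : E3) : crossL a b = cross3 a b := rfl

theorem cross3_anticomm (a b : E3) : cross3 a b = -cross3 b a := by
  rw [cross3, cross3, ← cross_anticomm]; rfl

theorem inner_cross3_anticomm (a u v : E3) : ⟪a, cross3 u v⟫ = -⟪a, cross3 v u⟫ := by
  rw [cross3_anticomm, inner_neg_right]

theorem dotProduct_cross_eq_zero_of_orthogonal {K : Type*} [CommRing K] [IsDomain K]
    {a : Fin 3 → K} (ha : a ≠ 0) {u v w : Fin 3 → K} (hu : u ⬝ᵥ a = 0) (hv : v ⬝ᵥ a = 0) (hw : w ⬝ᵥ a = 0) :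
    u ⬝ᵥ v ⨯₃ w = 0 := by
  rw [triple_product_eq_det]
  refine Matrix.exists_mulVec_eq_zero_iff.mp ⟨a, ha, ?_⟩
  ext i; fin_cases i <;> simpa [Matrix.mulVec]

theorem inner_cross3_eq_zero_of_orthogonal {a : E3} (ha : a ≠ 0) {u v w : E3}
    (hu : ⟪a, u⟫ = 0) (hv : ⟪a, v⟫ = 0) (hw : ⟪a, w⟫ = 0) : ⟪u, cross3 v w⟫ = 0 := by
  rw [EuclideanSpace.inner_eq_star_dotProduct, star_trivial, dotProduct_comm]
  simp only [EuclideanSpace.inner_eq_star_dotProduct, star_trivial] at hu hv hw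
  exact dotProduct_cross_eq_zero_of_orthogonal (by simpa using ha) hu hv hw

section Calculus

variable {E : Type*} [NormedAddCommGroup E] [NormedSpace ℝ E] {x : E}

theorem fderiv_cross3_apply {f g : E → E3} (hf : DifferentiableAt ℝ f x)
    (hg : DifferentiableAt ℝ g x) (v : E) :
    fderiv ℝ (fun y => cross3 (f y) (g y)) x v
      = cross3 (fderiv ℝ f x v) (g x) + cross3 (f x) (fderiv ℝ g x v) := by
  rw [← funext fun y => crossL_apply (f y) (g y), crossL.fderiv_of_bilinear hf hg]
  simp [crossL_apply, add_comm]

theorem DifferentiableAt.cross3 {f g : E → E3} (hf : DifferentiableAt ℝ f x)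
    (hg : DifferentiableAt ℝ g x) : DifferentiableAt ℝ (fun y => cross3 (f y) (g y)) x :=
  (crossL.hasFDerivAt_of_bilinear hf.hasFDerivAt hg.hasFDerivAt).differentiableAt

theorem fderiv_inner_cross3_apply {f g h : E → E3} (hf : DifferentiableAt ℝ f x)
    (hg : DifferentiableAt ℝ g x) (hh : DifferentiableAt ℝ h x) (v : E) :
    fderiv ℝ (fun y => ⟪f y, cross3 (g y) (h y)⟫) x v
      = ⟪fderiv ℝ f x v, cross3 (g x) (h x)⟫ + ⟪f x, cross3 (fderiv ℝ g x v) (h x)⟫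
        + ⟪f x, cross3 (g x) (fderiv ℝ h x v)⟫ := by
  rw [fderiv_inner_apply ℝ hf (hg.cross3 hh), fderiv_cross3_apply hg hh, inner_add_right]
  ring

theorem fderiv_fderiv_apply {F : Type*} [NormedAddCommGroup F] [NormedSpace ℝ F]
    {f : E → F} (hf : DifferentiableAt ℝ (fderiv ℝ f) x) (u v : E) :
    fderiv ℝ (fun y => fderiv ℝ f y u) x v = fderiv ℝ (fderiv ℝ f) x v u := by
  simp [fderiv_clm_apply hf (differentiableAt_const u)]

theorem inner_fderiv_eq_zero_of_norm_eq_one {F : Type*} [NormedAddCommGroup F]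
    [InnerProductSpace ℝ F] {f : E → F} (hf : DifferentiableAt ℝ f x) (hunit : ∀ y, ‖f y‖ = 1)
    (v : E) : ⟪f x, fderiv ℝ f x v⟫ = 0 := by
  have h := hf.hasFDerivAt.norm_sq
  simp only [hunit, one_pow] at h
  simpa using congrArg (fun L => L v) ((hasFDerivAt_const (1 : ℝ) x).unique h)

end Calculus

section Vorticity

variable {E : Type*} [NormedAddCommGroup E] [NormedSpace ℝ E] {m : E → E3} {x : E}

/-- `omega m μ ν` unfolds to `vorticity m (single μ 1) (single ν 1)`. -/
def vorticity (m : E → E3) (u v : E) (y : E) : ℝ :=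
  ⟪m y, cross3 (fderiv ℝ m y u) (fderiv ℝ m y v)⟫

theorem fderiv_vorticity_apply (hm : ContDiffAt ℝ 2 m x) (u v w : E) :
    fderiv ℝ (vorticity m u v) x w
      = ⟪fderiv ℝ m x w, cross3 (fderiv ℝ m x u) (fderiv ℝ m x v)⟫
        + ⟪m x, cross3 (fderiv ℝ (fderiv ℝ m) x w u) (fderiv ℝ m x v)⟫
        + ⟪m x, cross3 (fderiv ℝ m x u) (fderiv ℝ (fderiv ℝ m) x w v)⟫ := by
  have hDm : DifferentiableAt ℝ (fderiv ℝ m) x :=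
    (hm.fderiv_right (m := 1) le_rfl).differentiableAt one_ne_zero
  have hDm_apply (u : E) : DifferentiableAt ℝ (fun y => fderiv ℝ m y u) x :=
    hDm.clm_apply (differentiableAt_const u)
  unfold vorticity
  rw [fderiv_inner_cross3_apply (hm.differentiableAt two_ne_zero) (hDm_apply u)
    (hDm_apply v), fderiv_fderiv_apply hDm, fderiv_fderiv_apply hDm]

theorem fderiv_vorticity_cyclic_sum_eq_zero (hm : ContDiffAt ℝ 2 m x)
    (hunit : ∀ y, ‖m y‖ = 1) (u v w : E) :
    fderiv ℝ (vorticity m u v) x w + fderiv ℝ (vorticity m w u) x v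
      + fderiv ℝ (vorticity m v w) x u = 0 := by
  have hm0 : m x ≠ 0 := norm_ne_zero_iff.mp (by simp [hunit])
  have htangent (v : E) : ⟪m x, fderiv ℝ m x v⟫ = 0 :=
    inner_fderiv_eq_zero_of_norm_eq_one (hm.differentiableAt two_ne_zero) hunit v
  have hsymm : IsSymmSndFDerivAt ℝ m x := hm.isSymmSndFDerivAt (by simp)
  simp only [fderiv_vorticity_apply hm,
    inner_cross3_eq_zero_of_orthogonal hm0 (htangent _) (htangent _) (htangent _)]
  rw [hsymm v w, hsymm u v, hsymm u w]
  linarith [inner_cross3_anticomm (m x) (fderiv ℝ (fderiv ℝ m) x w u) (fderiv ℝ m x v),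
    inner_cross3_anticomm (m x) (fderiv ℝ (fderiv ℝ m) x w v) (fderiv ℝ m x u),
    inner_cross3_anticomm (m x) (fderiv ℝ (fderiv ℝ m) x v u) (fderiv ℝ m x w)]

end Vorticity

/-- Bianchi's identity for the space-time vorticity of a unit-length field. -/
theorem bianchi_identity (m : E4 → E3) (hm : ContDiff ℝ 2 m)
    (hunit : ∀ x, ‖m x‖ = 1) (σ μ ν : Fin 4) (x : E4) :
    pd4 σ (omega m μ ν) x + pd4 ν (omega m σ μ) x + pd4 μ (omega m ν σ) x = 0 :=
  fderiv_vorticity_cyclic_sum_eq_zero hm.contDiffAt hunit _ _ _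
end
end

section
/- Let 1 ≤ p ≤ ∞ and let q be its conjugate exponent (1/p + 1/q = 1), let 0 ≤ k' ≤ k < ∞ be real numbers, and set ℓ := (k + 3/q) / (k' + 3/q + (k − k')/p). Then there exists a constant C = C(k, k', p) > 0 such that for every measurable function f : ℝ³ × ℝ³ → [0, ∞) with ‖f‖_{L^p(ℝ³×ℝ³)} < ∞ and finite k-th velocity moment M_k(f) := ∫_{ℝ³}∫_{ℝ³} ‖v‖^k f(x, v) dv dx < ∞, the k'-th moment density m_{k'}(f)(x) := ∫_{ℝ³} ‖v‖^{k'} f(x, v) dv belongs to L^ℓ(ℝ³) and satisfies ‖m_{k'}(f)‖_{L^ℓ(ℝ³)} ≤ C ‖f‖_{L^p}^{(k−k')/(k+3/q)} · M_k(f)^{(k'+3/q)/(k+3/q)}. -/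
/-!
Fix `x` and `R > 0` and split the `v`-integral of `‖v‖ ^ k' f (x, v)` at `‖v‖ = R`. On the ball,
Hölder's inequality bounds it by `‖f (x, ·)‖_p ‖‖v‖ ^ k'‖_{L^q(B_R)} ≲ ‖f (x, ·)‖_p R ^ (k' + 3/q)`;
off the ball, `‖v‖ ^ k' ≤ R ^ (-(k - k')) ‖v‖ ^ k`. Choosing `R` to balance the two terms gives
`m_{k'}(x) ≲ ‖f (x, ·)‖_p ^ α m_k(x) ^ β` with `α = (k - k')/(k + 3/q)` and `β = 1 - α`.
The exponent `ℓ` is exactly the one for which `αℓ/p + βℓ = 1`, so raising this to the power `ℓ`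
and applying Hölder's inequality in `x` bounds `∫ m_{k'}^ℓ` by `‖f‖_p ^ (αℓ) M_k ^ (βℓ)`.
-/

open MeasureTheory ENNReal

noncomputable section

open Filter Topology Metric Module

lemma tendsto_mul_ofReal_rpow_neg_atTop {b : ℝ≥0∞} (hb : b ≠ ∞) {t : ℝ} (ht : 0 < t) :
    Tendsto (fun R : ℝ => b * ENNReal.ofReal R ^ (-t)) atTop (𝓝 0) := by
  have h : Tendsto (fun R : ℝ => ENNReal.ofReal R ^ (-t)) atTop (𝓝 0) := by
    refine (ENNReal.tendsto_ofReal (tendsto_rpow_neg_atTop ht)).congr' ?_ |>.trans (by simp)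
    filter_upwards [eventually_gt_atTop 0] with R hR using (ENNReal.ofReal_rpow_of_pos hR).symm
  simpa using ENNReal.Tendsto.const_mul h (Or.inr hb)

lemma le_two_mul_rpow_mul_rpow_of_forall_le {m a b : ℝ≥0∞} {s t : ℝ} (hs : 0 ≤ s) (ht : 0 < t)
    (ha : a ≠ ∞) (hb : b ≠ ∞)
    (h : ∀ R : ℝ, 0 < R → m ≤ a * ENNReal.ofReal R ^ s + b * ENNReal.ofReal R ^ (-t)) :
    m ≤ 2 * a ^ (t / (s + t)) * b ^ (s / (s + t)) := by
  have hst : 0 < s + t := by linarith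
  rcases eq_or_ne a 0 with rfl | ha₀
  · rw [ENNReal.zero_rpow_of_pos (by positivity), mul_zero, zero_mul]
    refine ge_of_tendsto (tendsto_mul_ofReal_rpow_neg_atTop hb ht) ?_
    filter_upwards [eventually_gt_atTop 0] with R hR
    simpa using h R hR
  rcases eq_or_ne b 0 with rfl | hb₀
  · rcases hs.eq_or_lt with rfl | hs
    · calc m ≤ a := by simpa using h 1 one_pos
        _ ≤ 2 * a := le_mul_of_one_le_left' one_le_two
        _ = _ := by simp [ht.ne']
    · rw [ENNReal.zero_rpow_of_pos (by positivity), mul_zero]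
      refine ge_of_tendsto (tendsto_mul_ofReal_rpow_neg_atTop ha hs) ?_
      filter_upwards [eventually_gt_atTop 0] with R hR
      simpa [ENNReal.ofReal_inv_of_pos hR, ENNReal.inv_rpow, ENNReal.rpow_neg] using
        h R⁻¹ (inv_pos.2 hR)
  -- with `b = a * c`, both terms equal `a * c ^ (s / (s + t))` when `R ^ (s + t) = c`
  set c := b / a with hc
  have hc₀ : c ≠ 0 := by simp [hc, hb₀, ha]
  have hc_top : c ≠ ∞ := ENNReal.div_ne_top hb ha₀
  have hb_eq : b = a * c := (ENNReal.mul_div_cancel ha₀ ha).symm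
  have hρ : ENNReal.ofReal ((c ^ (1 / (s + t))).toReal) = c ^ (1 / (s + t)) :=
    ENNReal.ofReal_toReal (ENNReal.rpow_ne_top_of_nonneg (by positivity) hc_top)
  have hρ_pos : 0 < (c ^ (1 / (s + t))).toReal :=
    ENNReal.toReal_pos (by simp [hc₀, hc_top])
      (ENNReal.rpow_ne_top_of_nonneg (by positivity) hc_top)
  have h₁ : a * (c ^ (1 / (s + t))) ^ s = a * c ^ (s / (s + t)) := by
    rw [← ENNReal.rpow_mul, one_div_mul_eq_div]
  have h₂ : b * (c ^ (1 / (s + t))) ^ (-t) = a * c ^ (s / (s + t)) := by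
    rw [hb_eq, ← ENNReal.rpow_mul, mul_assoc, show s / (s + t) = 1 + 1 / (s + t) * -t by
      field_simp; ring, ENNReal.rpow_add _ _ hc₀ hc_top, ENNReal.rpow_one]
  have h₃ : a ^ (t / (s + t)) * b ^ (s / (s + t)) = a * c ^ (s / (s + t)) := by
    rw [hb_eq, ENNReal.mul_rpow_of_nonneg _ _ (by positivity), ← mul_assoc,
      ← ENNReal.rpow_add _ _ ha₀ ha, ← add_div, add_comm, div_self hst.ne', ENNReal.rpow_one]
  calc m ≤ a * (c ^ (1 / (s + t))) ^ s + b * (c ^ (1 / (s + t))) ^ (-t) := by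
        simpa only [hρ] using h _ hρ_pos
    _ = 2 * a ^ (t / (s + t)) * b ^ (s / (s + t)) := by rw [h₁, h₂, mul_assoc, h₃, two_mul]

lemma ENNReal.HolderConjugate.toReal_inv_add_toReal_inv (p q : ℝ≥0∞) [p.HolderConjugate q] :
    p.toReal⁻¹ + q.toReal⁻¹ = 1 := by
  have h := congrArg ENNReal.toReal (ENNReal.HolderConjugate.inv_add_inv_eq_one p q)
  rwa [ENNReal.toReal_add (by simp [ENNReal.HolderConjugate.ne_zero p q])
    (by simp [ENNReal.HolderConjugate.ne_zero q p]), ENNReal.toReal_inv, ENNReal.toReal_inv,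
    ENNReal.toReal_one] at h

section Velocity

variable {E : Type*} [NormedAddCommGroup E] [MeasurableSpace E]

lemma setLIntegral_compl_closedBall_enorm_rpow_norm_mul_le [OpensMeasurableSpace E]
    (μ : Measure E) {k k' R : ℝ} (hk : k' ≤ k) (hR : 0 < R) (g : E → ℝ) :
    ∫⁻ v in (closedBall 0 R)ᶜ, ‖‖v‖ ^ k' * g v‖ₑ ∂μ
      ≤ (∫⁻ v, ‖‖v‖ ^ k * g v‖ₑ ∂μ) * ENNReal.ofReal R ^ (-(k - k')) := by
  rw [← lintegral_mul_const' _ _ (by simp [ENNReal.ofReal_eq_zero, hR.not_ge])]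
  refine (setLIntegral_mono' measurableSet_closedBall.compl fun v hv => ?_).trans
    (setLIntegral_le_lintegral _ _)
  have hRv : R < ‖v‖ := by simpa using hv
  rw [enorm_mul, enorm_mul, mul_right_comm]
  gcongr ?_ * _
  rw [Real.enorm_eq_ofReal (by positivity), Real.enorm_eq_ofReal (by positivity),
    ENNReal.ofReal_rpow_of_pos hR, ← ENNReal.ofReal_mul (by positivity)]
  refine ENNReal.ofReal_le_ofReal ?_
  calc ‖v‖ ^ k' = ‖v‖ ^ k * ‖v‖ ^ (-(k - k')) := by
        rw [← Real.rpow_add (hR.trans hRv)]; ring_nf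
    _ ≤ ‖v‖ ^ k * R ^ (-(k - k')) :=
        mul_le_mul_of_nonneg_left (Real.rpow_le_rpow_of_nonpos hR hRv.le (by linarith))
          (by positivity)

variable [NormedSpace ℝ E] [FiniteDimensional ℝ E] [BorelSpace E]

lemma eLpNorm_indicator_closedBall_rpow_norm_le (μ : Measure E) [μ.IsAddHaarMeasure] (q : ℝ≥0∞)
    {k R : ℝ} (hk : 0 ≤ k) (hR : 0 ≤ R) :
    eLpNorm ((closedBall (0 : E) R).indicator fun v => ‖v‖ ^ k) q μ
      ≤ μ (ball 0 1) ^ (1 / q.toReal) * ENNReal.ofReal R ^ (k + finrank ℝ E / q.toReal) := by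
  calc eLpNorm ((closedBall (0 : E) R).indicator fun v => ‖v‖ ^ k) q μ
      ≤ eLpNorm ((closedBall (0 : E) R).indicator fun _ => R ^ k) q μ := by
        refine eLpNorm_mono fun v => ?_
        by_cases hv : v ∈ closedBall (0 : E) R
        · have hv' : ‖v‖ ≤ R := mem_closedBall_zero_iff.1 hv
          simp only [Set.indicator_of_mem hv, Real.norm_eq_abs]
          rw [abs_of_nonneg (by positivity), abs_of_nonneg (by positivity)]
          exact Real.rpow_le_rpow (norm_nonneg v) hv' hk
        · simp [Set.indicator_of_notMem hv]
    _ ≤ ‖R ^ k‖ₑ * μ (closedBall 0 R) ^ (1 / q.toReal) := eLpNorm_indicator_const_le _ _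
    _ = μ (ball 0 1) ^ (1 / q.toReal) * ENNReal.ofReal R ^ (k + finrank ℝ E / q.toReal) := by
        rw [Measure.addHaar_closedBall μ 0 hR, Real.enorm_eq_ofReal (by positivity),
          ENNReal.mul_rpow_of_nonneg _ _ (by positivity), ← Real.rpow_natCast,
          ← ENNReal.ofReal_rpow_of_nonneg hR (by positivity),
          ← ENNReal.ofReal_rpow_of_nonneg hR (by positivity), ← ENNReal.rpow_mul,
          ENNReal.rpow_add_of_nonneg _ _ hk (by positivity), mul_one_div]
        ring

lemma setLIntegral_closedBall_enorm_rpow_norm_mul_le (μ : Measure E) [μ.IsAddHaarMeasure]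
    (p q : ℝ≥0∞) [p.HolderConjugate q] {k R : ℝ} (hk : 0 ≤ k) (hR : 0 ≤ R) {g : E → ℝ}
    (hg : AEStronglyMeasurable g μ) :
    ∫⁻ v in closedBall 0 R, ‖‖v‖ ^ k * g v‖ₑ ∂μ
      ≤ μ (ball 0 1) ^ (1 / q.toReal) * eLpNorm g p μ
        * ENNReal.ofReal R ^ (k + finrank ℝ E / q.toReal) := by
  set w := (closedBall (0 : E) R).indicator fun v => ‖v‖ ^ k
  have hw : AEStronglyMeasurable w μ :=
    (Measurable.indicator (by fun_prop) measurableSet_closedBall).aestronglyMeasurable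
  calc ∫⁻ v in closedBall 0 R, ‖‖v‖ ^ k * g v‖ₑ ∂μ = eLpNorm (fun v => w v * g v) 1 μ := by
        rw [eLpNorm_one_eq_lintegral_enorm, ← lintegral_indicator measurableSet_closedBall]
        congr 1 with v
        by_cases hv : v ∈ closedBall (0 : E) R <;> simp [w, hv]
    _ ≤ 1 * eLpNorm w q μ * eLpNorm g p μ :=
        eLpNorm_le_eLpNorm_mul_eLpNorm'_of_norm hw hg (· * ·) 1
          (ae_of_all _ fun v => by simp [norm_mul])
    _ ≤ 1 * (μ (ball 0 1) ^ (1 / q.toReal) * ENNReal.ofReal R ^ (k + finrank ℝ E / q.toReal))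
          * eLpNorm g p μ := by
        gcongr
        exact eLpNorm_indicator_closedBall_rpow_norm_le μ q hk hR
    _ = _ := by ring

lemma lintegral_enorm_rpow_norm_mul_le (μ : Measure E) [μ.IsAddHaarMeasure]
    (p q : ℝ≥0∞) [p.HolderConjugate q] {k k' : ℝ} (hk' : 0 ≤ k') (hk : k' < k) {g : E → ℝ}
    (hg : AEStronglyMeasurable g μ) (hg_p : eLpNorm g p μ ≠ ∞)
    (hg_k : ∫⁻ v, ‖‖v‖ ^ k * g v‖ₑ ∂μ ≠ ∞) :
    ∫⁻ v, ‖‖v‖ ^ k' * g v‖ₑ ∂μ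
      ≤ 2 * (μ (ball 0 1) ^ (1 / q.toReal) * eLpNorm g p μ)
            ^ ((k - k') / (k + finrank ℝ E / q.toReal))
        * (∫⁻ v, ‖‖v‖ ^ k * g v‖ₑ ∂μ)
            ^ ((k' + finrank ℝ E / q.toReal) / (k + finrank ℝ E / q.toReal)) := by
  have hball : μ (ball (0 : E) 1) ^ (1 / q.toReal) * eLpNorm g p μ ≠ ∞ :=
    ENNReal.mul_ne_top (ENNReal.rpow_ne_top_of_nonneg (by positivity) measure_ball_lt_top.ne) hg_p
  have key := le_two_mul_rpow_mul_rpow_of_forall_le (m := ∫⁻ v, ‖‖v‖ ^ k' * g v‖ₑ ∂μ)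
    (s := k' + finrank ℝ E / q.toReal) (t := k - k') (by positivity) (by linarith) hball hg_k
    fun R hR => by
      rw [← lintegral_add_compl _ (measurableSet_closedBall (x := 0) (ε := R))]
      exact add_le_add (setLIntegral_closedBall_enorm_rpow_norm_mul_le μ p q hk' hR.le hg)
        (setLIntegral_compl_closedBall_enorm_rpow_norm_mul_le μ hk.le hR g)
  rwa [show k' + finrank ℝ E / q.toReal + (k - k') = k + finrank ℝ E / q.toReal by ring] at key

section Slices

variable {X Y F : Type*} [MeasurableSpace X] [MeasurableSpace Y] [NormedAddCommGroup F]
  {μ : Measure X} {ν : Measure Y} [SFinite ν] {f : X × Y → F} {p : ℝ≥0∞}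

lemma lintegral_eLpNorm_slice_rpow (hp₀ : p ≠ 0) (hp : p ≠ ∞)
    (hf : AEStronglyMeasurable f (μ.prod ν)) :
    ∫⁻ x, eLpNorm (fun y => f (x, y)) p ν ^ p.toReal ∂μ = eLpNorm f p (μ.prod ν) ^ p.toReal := by
  have hp' : p.toReal ≠ 0 := ENNReal.toReal_ne_zero.2 ⟨hp₀, hp⟩
  simp_rw [eLpNorm_eq_lintegral_rpow_enorm_toReal hp₀ hp, ← ENNReal.rpow_mul,
    one_div_mul_cancel hp', ENNReal.rpow_one]
  exact (lintegral_prod _ (hf.enorm.pow_const _)).symm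

lemma aemeasurable_eLpNorm_slice (hp : p ≠ ∞) (hf : AEStronglyMeasurable f (μ.prod ν)) :
    AEMeasurable (fun x => eLpNorm (fun y => f (x, y)) p ν) μ := by
  rcases eq_or_ne p 0 with rfl | hp₀
  · simp
  simp_rw [eLpNorm_eq_lintegral_rpow_enorm_toReal hp₀ hp]
  exact (hf.enorm.pow_const _).lintegral_prod_right'.pow_const _

lemma ae_eLpNorm_slice_top_le :
    ∀ᵐ x ∂μ, eLpNorm (fun y => f (x, y)) ∞ ν ≤ eLpNorm f ∞ (μ.prod ν) := by
  filter_upwards [Measure.ae_ae_of_ae_prod (enorm_ae_le_eLpNormEssSup f (μ.prod ν))] with x hx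
  exact essSup_le_of_ae_le _ hx

lemma ae_eLpNorm_slice_ne_top (hf : AEStronglyMeasurable f (μ.prod ν))
    (hf_p : eLpNorm f p (μ.prod ν) ≠ ∞) : ∀ᵐ x ∂μ, eLpNorm (fun y => f (x, y)) p ν ≠ ∞ := by
  rcases eq_or_ne p ∞ with rfl | hp
  · filter_upwards [ae_eLpNorm_slice_top_le (ν := ν) (f := f)] with x hx
    exact ne_top_of_le_ne_top hf_p hx
  rcases eq_or_ne p 0 with rfl | hp₀
  · simp
  have hp' : 0 < p.toReal := ENNReal.toReal_pos hp₀ hp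
  have hint : ∫⁻ x, eLpNorm (fun y => f (x, y)) p ν ^ p.toReal ∂μ ≠ ∞ := by
    rw [lintegral_eLpNorm_slice_rpow hp₀ hp hf]
    exact ENNReal.rpow_ne_top_of_nonneg hp'.le hf_p
  filter_upwards [ae_lt_top' ((aemeasurable_eLpNorm_slice hp hf).pow_const _) hint] with x hx
  exact (ENNReal.rpow_lt_top_iff_of_pos hp').1 hx |>.ne

-- `p.toReal = 0` for `p = ∞`, so then `hac` reads `c = 1`, matching `1 / ∞ = 0`.
lemma lintegral_eLpNorm_slice_rpow_mul_le (hp : p ≠ 0) {a c : ℝ} (ha : 0 ≤ a) (hc : 0 ≤ c)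
    (hac : a / p.toReal + c = 1) (hf : AEStronglyMeasurable f (μ.prod ν)) {b : X → ℝ≥0∞}
    (hb : AEMeasurable b μ) :
    ∫⁻ x, eLpNorm (fun y => f (x, y)) p ν ^ a * b x ^ c ∂μ
      ≤ eLpNorm f p (μ.prod ν) ^ a * (∫⁻ x, b x ∂μ) ^ c := by
  rcases eq_or_ne p ∞ with rfl | hp_top
  · obtain rfl : c = 1 := by simpa using hac
    simp_rw [ENNReal.rpow_one]
    rw [← lintegral_const_mul'' _ hb]
    refine lintegral_mono_ae ?_
    filter_upwards [ae_eLpNorm_slice_top_le (ν := ν) (f := f)] with x hx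
    gcongr
  have hp' : p.toReal ≠ 0 := ENNReal.toReal_ne_zero.2 ⟨hp, hp_top⟩
  have hu := (aemeasurable_eLpNorm_slice hp_top hf).pow_const p.toReal
  calc ∫⁻ x, eLpNorm (fun y => f (x, y)) p ν ^ a * b x ^ c ∂μ
      = ∫⁻ x, (eLpNorm (fun y => f (x, y)) p ν ^ p.toReal) ^ (a / p.toReal) * b x ^ c ∂μ := by
        simp_rw [← ENNReal.rpow_mul, mul_div_cancel₀ a hp']
    _ ≤ (∫⁻ x, eLpNorm (fun y => f (x, y)) p ν ^ p.toReal ∂μ) ^ (a / p.toReal)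
          * (∫⁻ x, b x ∂μ) ^ c :=
        ENNReal.lintegral_mul_norm_pow_le hu hb (by positivity) hc hac
    _ = eLpNorm f p (μ.prod ν) ^ a * (∫⁻ x, b x ∂μ) ^ c := by
        rw [lintegral_eLpNorm_slice_rpow hp hp_top hf, ← ENNReal.rpow_mul, mul_div_cancel₀ a hp']

end Slices

section Moments

variable {X E : Type*} [MeasurableSpace X] [NormedAddCommGroup E] [MeasurableSpace E]

def momentDensity (ν : Measure E) (k : ℝ) (f : X × E → ℝ) (x : X) : ℝ≥0∞ :=
  ∫⁻ v, ‖‖v‖ ^ k * f (x, v)‖ₑ ∂ν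

variable [NormedSpace ℝ E] [FiniteDimensional ℝ E] [BorelSpace E]

theorem lintegral_momentDensity_rpow_le [Nontrivial E] (μ : Measure X) (ν : Measure E)
    [ν.IsAddHaarMeasure] (p q : ℝ≥0∞) [p.HolderConjugate q] {k k' : ℝ} (hk' : 0 ≤ k')
    (hk : k' < k) {f : X × E → ℝ} (hf : AEStronglyMeasurable f (μ.prod ν))
    (hf_p : eLpNorm f p (μ.prod ν) ≠ ∞) (hf_k : ∫⁻ x, momentDensity ν k f x ∂μ ≠ ∞) :
    (∫⁻ x, momentDensity ν k' f x
        ^ ((k + finrank ℝ E / q.toReal) / (k' + finrank ℝ E / q.toReal + (k - k') / p.toReal)) ∂μ)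
      ^ ((k' + finrank ℝ E / q.toReal + (k - k') / p.toReal) / (k + finrank ℝ E / q.toReal))
    ≤ 2 * (ν (ball 0 1) ^ (1 / q.toReal)) ^ ((k - k') / (k + finrank ℝ E / q.toReal))
      * eLpNorm f p (μ.prod ν) ^ ((k - k') / (k + finrank ℝ E / q.toReal))
      * (∫⁻ x, momentDensity ν k f x ∂μ)
          ^ ((k' + finrank ℝ E / q.toReal) / (k + finrank ℝ E / q.toReal)) := by
  set d : ℝ := (finrank ℝ E : ℝ)
  set D := k + d / q.toReal
  set L := k' + d / q.toReal + (k - k') / p.toReal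
  set α := (k - k') / D
  set β := (k' + d / q.toReal) / D
  set c := 2 * (ν (ball 0 1) ^ (1 / q.toReal)) ^ α
  have hd : 1 ≤ d := Nat.one_le_cast.2 Module.finrank_pos
  have hpq := HolderConjugate.toReal_inv_add_toReal_inv p q
  have hD : 0 < D := add_pos_of_pos_of_nonneg (by linarith) (by positivity)
  have hL : 0 < L := by
    simp only [L, div_eq_mul_inv]
    rcases (inv_nonneg.2 p.toReal_nonneg).eq_or_lt with hp | hp
    · nlinarith
    · have : 0 < (k - k') * p.toReal⁻¹ := mul_pos (by linarith) hp
      positivity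
  set ℓ := D / L
  have hℓ : 0 < ℓ := div_pos hD hL
  have hαℓ : α * ℓ = (k - k') / L := by simp only [α, ℓ]; field_simp
  have hβℓ : β * ℓ = (k' + d / q.toReal) / L := by simp only [β, ℓ]; field_simp
  have hexp : α * ℓ / p.toReal + β * ℓ = 1 := by
    rw [hαℓ, hβℓ, div_div, mul_comm, ← div_div, ← add_div, add_comm]
    exact div_self hL.ne'
  have hm : AEMeasurable (momentDensity ν k f) μ :=
    ((by fun_prop : Measurable fun z : X × E => ‖z.2‖ ^ k).aestronglyMeasurable.mul hf
      |>.enorm.lintegral_prod_right')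
  have hc : c ≠ ∞ := ENNReal.mul_ne_top ENNReal.ofNat_ne_top <|
    ENNReal.rpow_ne_top_of_nonneg (div_nonneg (by linarith) hD.le) <|
      ENNReal.rpow_ne_top_of_nonneg (by positivity) measure_ball_lt_top.ne
  have hpt : ∀ᵐ x ∂μ, momentDensity ν k' f x
      ≤ c * eLpNorm (fun v => f (x, v)) p ν ^ α * momentDensity ν k f x ^ β := by
    filter_upwards [hf.prodMk_left, ae_eLpNorm_slice_ne_top hf hf_p, ae_lt_top' hm hf_k]
      with x hx_meas hx_p hx_k
    calc momentDensity ν k' f x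
        ≤ 2 * (ν (ball 0 1) ^ (1 / q.toReal) * eLpNorm (fun v => f (x, v)) p ν) ^ α
          * momentDensity ν k f x ^ β :=
          lintegral_enorm_rpow_norm_mul_le ν p q hk' hk hx_meas hx_p hx_k.ne
      _ = c * eLpNorm (fun v => f (x, v)) p ν ^ α * momentDensity ν k f x ^ β := by
          rw [ENNReal.mul_rpow_of_nonneg _ _ (by positivity)]; ring
  calc (∫⁻ x, momentDensity ν k' f x ^ ℓ ∂μ) ^ (L / D)
      = (∫⁻ x, momentDensity ν k' f x ^ ℓ ∂μ) ^ ℓ⁻¹ := by rw [inv_div]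
    _ ≤ (∫⁻ x, c ^ ℓ * (eLpNorm (fun v => f (x, v)) p ν ^ (α * ℓ)
          * momentDensity ν k f x ^ (β * ℓ)) ∂μ) ^ ℓ⁻¹ := by
        gcongr ?_ ^ _
        refine lintegral_mono_ae ?_
        filter_upwards [hpt] with x hx
        grw [hx]
        rw [ENNReal.mul_rpow_of_nonneg _ _ hℓ.le, ENNReal.mul_rpow_of_nonneg _ _ hℓ.le,
          ← ENNReal.rpow_mul, ← ENNReal.rpow_mul, mul_assoc]
    _ ≤ (c ^ ℓ * (eLpNorm f p (μ.prod ν) ^ (α * ℓ)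
          * (∫⁻ x, momentDensity ν k f x ∂μ) ^ (β * ℓ))) ^ ℓ⁻¹ := by
        rw [lintegral_const_mul' _ _ (ENNReal.rpow_ne_top_of_nonneg hℓ.le hc)]
        gcongr
        exact lintegral_eLpNorm_slice_rpow_mul_le (ENNReal.HolderConjugate.ne_zero p q)
          (by positivity) (by positivity) hexp hf hm
    _ = c * eLpNorm f p (μ.prod ν) ^ α * (∫⁻ x, momentDensity ν k f x ∂μ) ^ β := by
        rw [ENNReal.mul_rpow_of_nonneg (c ^ ℓ) _ (by positivity),
          ENNReal.mul_rpow_of_nonneg (eLpNorm f p (μ.prod ν) ^ (α * ℓ)) _ (by positivity),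
          ENNReal.rpow_rpow_inv hℓ.ne', ← ENNReal.rpow_mul, ← ENNReal.rpow_mul,
          mul_inv_cancel_right₀ hℓ.ne', mul_inv_cancel_right₀ hℓ.ne', ← mul_assoc]

end Moments

theorem velocity_moment_estimate_general (p q : ℝ≥0∞) (hpq : 1 / p + 1 / q = 1)
    (k k' : ℝ) (hk' : 0 ≤ k') (hk : k' ≤ k) :
    ∃ C : ℝ, 0 < C ∧
      ∀ f : E3 × E3 → ℝ, Measurable f → (∀ z, 0 ≤ f z) →
        eLpNorm f p volume < ⊤ →
        (∫⁻ x, ∫⁻ v, ENNReal.ofReal (‖v‖ ^ k * f (x, v))) < ⊤ →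
        (∫⁻ x, (∫⁻ v, ENNReal.ofReal (‖v‖ ^ k' * f (x, v)))
              ^ ((k + 3 / q.toReal) / (k' + 3 / q.toReal + (k - k') / p.toReal)))
            ^ ((k' + 3 / q.toReal + (k - k') / p.toReal) / (k + 3 / q.toReal)) < ⊤
        ∧ (∫⁻ x, (∫⁻ v, ENNReal.ofReal (‖v‖ ^ k' * f (x, v)))
              ^ ((k + 3 / q.toReal) / (k' + 3 / q.toReal + (k - k') / p.toReal)))
            ^ ((k' + 3 / q.toReal + (k - k') / p.toReal) / (k + 3 / q.toReal))
          ≤ ENNReal.ofReal C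
              * eLpNorm f p volume ^ ((k - k') / (k + 3 / q.toReal))
              * (∫⁻ x, ∫⁻ v, ENNReal.ofReal (‖v‖ ^ k * f (x, v)))
                  ^ ((k' + 3 / q.toReal) / (k + 3 / q.toReal)) := by
  have : p.HolderConjugate q := ENNReal.holderConjugate_iff.2 (by simpa only [one_div] using hpq)
  have hofReal (f : E3 × E3 → ℝ) (hf : ∀ z, 0 ≤ f z) (j : ℝ) (x : E3) :
      ∫⁻ v, ENNReal.ofReal (‖v‖ ^ j * f (x, v)) = momentDensity volume j f x :=
    lintegral_congr fun v => (Real.enorm_eq_ofReal (mul_nonneg (by positivity) (hf _))).symm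
  rcases hk.lt_or_eq with hk | rfl
  · set C := 2 * (volume (ball (0 : E3) 1) ^ (1 / q.toReal)) ^ ((k - k') / (k + 3 / q.toReal))
    have hD : 0 ≤ k + 3 / q.toReal := add_nonneg (by linarith) (by positivity)
    have hC : C ≠ ∞ := ENNReal.mul_ne_top ENNReal.ofNat_ne_top <|
      ENNReal.rpow_ne_top_of_nonneg (div_nonneg (by linarith) hD) <|
        ENNReal.rpow_ne_top_of_nonneg (by positivity) measure_ball_lt_top.ne
    have hC₀ : C ≠ 0 := mul_ne_zero two_ne_zero <| (ENNReal.rpow_pos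
      (ENNReal.rpow_pos (measure_ball_pos _ _ one_pos) measure_ball_lt_top.ne) (by finiteness)).ne'
    refine ⟨C.toReal, ENNReal.toReal_pos hC₀ hC, fun f hf hf₀ hf_p hf_k => ?_⟩
    simp only [hofReal f hf₀] at hf_k ⊢
    rw [Measure.volume_eq_prod] at hf_p ⊢
    have key := lintegral_momentDensity_rpow_le volume volume p q hk' hk hf.aestronglyMeasurable
      hf_p.ne hf_k.ne
    simp only [finrank_euclideanSpace_fin, Nat.cast_ofNat] at key
    rw [ENNReal.ofReal_toReal hC]
    refine ⟨key.trans_lt ?_, key⟩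
    exact ENNReal.mul_lt_top (ENNReal.mul_lt_top hC.lt_top
      (ENNReal.rpow_lt_top_of_nonneg (div_nonneg (by linarith) hD) hf_p.ne))
      (ENNReal.rpow_lt_top_of_nonneg (div_nonneg (by positivity) hD) hf_k.ne)
  · refine ⟨1, one_pos, fun f _ _ _ hf_k => ?_⟩
    simp only [sub_self, zero_div, add_zero, ENNReal.rpow_zero, mul_one, ENNReal.ofReal_one,
      one_mul]
    rcases eq_or_ne (k' + 3 / q.toReal) 0 with h | h <;> simp [h, hf_k]

/-- Velocity moment estimate (Lemma 3.2): for a nonnegative phase-space density `f`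
with `‖f‖_{L^p} < ∞` and finite `k`-th velocity moment, the `k'`-th moment density
lies in `L^ℓ` with `ℓ = (k + 3/q)/(k' + 3/q + (k-k')/p)` and satisfies the stated bound. -/
theorem velocity_moment_estimate (p q : ℝ≥0∞) (hp : 1 ≤ p) (hpq : 1 / p + 1 / q = 1)
    (k k' : ℝ) (hk' : 0 ≤ k') (hk : k' ≤ k) :
    ∃ C : ℝ, 0 < C ∧
      ∀ f : E3 × E3 → ℝ, Measurable f → (∀ z, 0 ≤ f z) →
        eLpNorm f p volume < ⊤ →
        (∫⁻ x, ∫⁻ v, ENNReal.ofReal (‖v‖ ^ k * f (x, v))) < ⊤ →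
        (∫⁻ x, (∫⁻ v, ENNReal.ofReal (‖v‖ ^ k' * f (x, v)))
              ^ ((k + 3 / q.toReal) / (k' + 3 / q.toReal + (k - k') / p.toReal)))
            ^ ((k' + 3 / q.toReal + (k - k') / p.toReal) / (k + 3 / q.toReal)) < ⊤
        ∧ (∫⁻ x, (∫⁻ v, ENNReal.ofReal (‖v‖ ^ k' * f (x, v)))
              ^ ((k + 3 / q.toReal) / (k' + 3 / q.toReal + (k - k') / p.toReal)))
            ^ ((k' + 3 / q.toReal + (k - k') / p.toReal) / (k + 3 / q.toReal))
          ≤ ENNReal.ofReal C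
              * eLpNorm f p volume ^ ((k - k') / (k + 3 / q.toReal))
              * (∫⁻ x, ∫⁻ v, ENNReal.ofReal (‖v‖ ^ k * f (x, v)))
                  ^ ((k' + 3 / q.toReal) / (k + 3 / q.toReal)) :=
  velocity_moment_estimate_general p q hpq k k' hk' hk
end Velocity
end
end
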